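/- arXiv:1106.5756 — 4 statements merged into one kernel-verified Lean document; each statement's English description precedes it below -/
import Mathlib

section
/- (Lemma 2(i)) Let ρ = |ψ₁⟩⟨ψ₁| ⊗ |ψ₂⟩⟨ψ₂| ⊗ |ψ₃⟩⟨ψ₃| be a fully product pure 3-qubit state with full correlation tensor T_{i₁i₂i₃} = tr(ρ (σ_{i₁} ⊗ σ_{i₂} ⊗ σ_{i₃})), i_j ∈ {1,2,3}. Then for each j ∈ {1,2,3}, the j-matricization of T satisfies ‖T_{\underline{j}}‖_k ≤ 1 for every k. -/
open Matrix BigOperators ComplexOrder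

noncomputable section

/-- The three standard Pauli matrices. -/
def pauli : Fin 3 → Matrix (Fin 2) (Fin 2) ℂ :=
  ![!![0, 1; 1, 0], !![0, -Complex.I; Complex.I, 0], !![1, 0; 0, -1]]

/-- The tensor (Kronecker) product of `n` local operators, acting on
`(ℂ²)^{⊗n}` with the Hilbert space indexed by functions `Fin n → Fin 2`. -/
def tensorOp {n : ℕ} (A : Fin n → Matrix (Fin 2) (Fin 2) ℂ) :
    Matrix (Fin n → Fin 2) (Fin n → Fin 2) ℂ :=
  fun r c => ∏ j, A j (r j) (c j)

/-- The full correlation tensor of an `n`-qubit state: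
`T_{i₁⋯i_n} = tr(ρ (σ_{i₁} ⊗ ⋯ ⊗ σ_{i_n}))`. -/
def corr {n : ℕ} (ρ : Matrix (Fin n → Fin 2) (Fin n → Fin 2) ℂ)
    (f : Fin n → Fin 3) : ℝ :=
  ((ρ * tensorOp fun j => pauli (f j)).trace).re

/-- The `A`-matricization of an `n`-index tensor `v`: the real matrix whose row
index collects the indices in `A` and whose column index collects the remaining
indices. -/
def matricize {n m : ℕ} (A : Finset (Fin n)) (v : (Fin n → Fin m) → ℝ) :
    Matrix ({j // j ∈ A} → Fin m) ({j // j ∉ A} → Fin m) ℝ :=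
  fun r c => v fun j => if h : j ∈ A then r ⟨j, h⟩ else c ⟨j, h⟩

/-- The singular values of a real matrix `M`: the square roots of the
eigenvalues of `MᵀM = MᴴM`. -/
def singVals {I J : Type*} [Fintype I] [Fintype J] [DecidableEq J]
    (M : Matrix I J ℝ) : J → ℝ :=
  fun j => Real.sqrt ((Matrix.posSemidef_conjTranspose_mul_self M).1.eigenvalues j)

/-- The Ky Fan `k` norm: the maximum, over sets of `k` of the singular values,
of their sum — equivalently, the sum of the `k` largest singular values. -/
def kyFanNorm {I J : Type*} [Fintype I] [Fintype J] [DecidableEq J]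
    (k : ℕ) (M : Matrix I J ℝ) : ℝ :=
  (Finset.univ : Finset (Finset J)).sup' ⟨∅, Finset.mem_univ ∅⟩
    fun s => if s.card = k then ∑ j ∈ s, singVals M j else 0

/-- The trace norm: the sum of all singular values. -/
def traceNorm {I J : Type*} [Fintype I] [Fintype J] [DecidableEq J]
    (M : Matrix I J ℝ) : ℝ :=
  ∑ j, singVals M j

/-!
For a product state the correlation tensor is the outer product of the Bloch vectors of the
factors, each of unit length, so every matricization is a rank-one matrix `vecMulVec u w` with
`‖u‖ = ‖w‖ = 1`. For any matrix at most `rank M` singular values are nonzero, so by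
Cauchy–Schwarz `‖M‖_k ≤ √(rank M) · ‖M‖_F`, and here `‖M‖_F = ‖u‖ ‖w‖ = 1`.
-/

lemma kyFanNorm_le_sqrt_rank_mul_trace {I J : Type*} [Fintype I] [Fintype J] [DecidableEq J]
    (k : ℕ) (M : Matrix I J ℝ) : kyFanNorm k M ≤ √(M.rank * (Mᴴ * M).trace) := by
  set hH := (posSemidef_conjTranspose_mul_self M).1
  have hnonneg : ∀ j, 0 ≤ hH.eigenvalues j :=
    (posSemidef_conjTranspose_mul_self M).eigenvalues_nonneg
  refine Finset.sup'_le _ _ fun s _ => ?_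
  split_ifs
  swap
  · positivity
  set nz := s.filter fun j => hH.eigenvalues j ≠ 0
  have hcard : (nz.card : ℝ) ≤ M.rank := by
    rw [← rank_conjTranspose_mul_self, hH.rank_eq_card_non_zero_eigs, Fintype.card_subtype]
    exact_mod_cast Finset.card_le_card (Finset.filter_subset_filter _ (Finset.subset_univ s))
  have hsum : ∑ j ∈ nz, hH.eigenvalues j ≤ (Mᴴ * M).trace := by
    rw [hH.trace_eq_sum_eigenvalues]
    exact Finset.sum_le_sum_of_subset_of_nonneg (Finset.subset_univ _) fun j _ _ => hnonneg j
  have hsupp : ∑ j ∈ s, singVals M j = ∑ j ∈ nz, √(hH.eigenvalues j) := by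
    refine (Finset.sum_filter_of_ne fun j _ h h0 => ?_).symm
    exact h (by simp only [singVals, h0, Real.sqrt_zero])
  rw [hsupp]
  apply Real.le_sqrt_of_sq_le
  calc (∑ j ∈ nz, √(hH.eigenvalues j)) ^ 2
        ≤ nz.card * ∑ j ∈ nz, √(hH.eigenvalues j) ^ 2 := sq_sum_le_card_mul_sum_sq
    _ = nz.card * ∑ j ∈ nz, hH.eigenvalues j := by
        simp only [Real.sq_sqrt (hnonneg _)]
    _ ≤ M.rank * (Mᴴ * M).trace := by
        gcongr
        exact Finset.sum_nonneg fun j _ => hnonneg j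

lemma trace_conjTranspose_vecMulVec_mul_self {I J : Type*} [Fintype I] [Fintype J]
    (u : I → ℝ) (w : J → ℝ) :
    ((vecMulVec u w)ᴴ * vecMulVec u w).trace = (u ⬝ᵥ u) * (w ⬝ᵥ w) := by
  simp [vecMulVec_mul_vecMulVec]

lemma kyFanNorm_vecMulVec_le {I J : Type*} [Fintype I] [Fintype J] [DecidableEq J]
    (k : ℕ) (u : I → ℝ) (w : J → ℝ) :
    kyFanNorm k (vecMulVec u w) ≤ √((u ⬝ᵥ u) * (w ⬝ᵥ w)) := by
  refine (kyFanNorm_le_sqrt_rank_mul_trace k _).trans (Real.sqrt_le_sqrt ?_)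
  rw [trace_conjTranspose_vecMulVec_mul_self]
  have hrank : ((vecMulVec u w).rank : ℝ) ≤ 1 := by exact_mod_cast rank_vecMulVec_le u w
  exact mul_le_of_le_one_left
    (mul_nonneg (dotProduct_self_star_nonneg u) (dotProduct_self_star_nonneg w)) hrank

lemma trace_vecMulVec_mul {R n : Type*} [CommSemiring R] [Fintype n] (a b : n → R)
    (B : Matrix n n R) : (vecMulVec a b * B).trace = b ⬝ᵥ B *ᵥ a := by
  rw [vecMulVec_mul, trace_vecMulVec, dotProduct_comm, dotProduct_mulVec]

lemma prod_dotProduct_tensorOp_mulVec_prod {n : ℕ} (x y : Fin n → Fin 2 → ℂ)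
    (A : Fin n → Matrix (Fin 2) (Fin 2) ℂ) :
    (fun r => ∏ j, x j (r j)) ⬝ᵥ tensorOp A *ᵥ (fun c => ∏ j, y j (c j))
      = ∏ j, x j ⬝ᵥ A j *ᵥ y j := by
  simp only [dotProduct, mulVec, tensorOp, Finset.mul_sum, Fintype.prod_sum,
    ← Finset.prod_mul_distrib]

def blochVector (ψ : Fin 2 → ℂ) (i : Fin 3) : ℝ := (star ψ ⬝ᵥ pauli i *ᵥ ψ).re

lemma pauli_isHermitian (i : Fin 3) : (pauli i).IsHermitian := by
  fin_cases i <;> ext a b <;> fin_cases a <;> fin_cases b <;> simp [pauli]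

lemma ofReal_blochVector (ψ : Fin 2 → ℂ) (i : Fin 3) :
    (blochVector ψ i : ℂ) = star ψ ⬝ᵥ pauli i *ᵥ ψ :=
  Complex.ext rfl ((pauli_isHermitian i).im_star_dotProduct_mulVec_self ψ).symm

lemma blochVector_dotProduct_self (ψ : Fin 2 → ℂ) :
    blochVector ψ ⬝ᵥ blochVector ψ = (∑ x, Complex.normSq (ψ x)) ^ 2 := by
  simp only [dotProduct, blochVector, pauli, Fin.sum_univ_two, Fin.sum_univ_three, mulVec,
    Complex.normSq_apply]
  simp only [Fin.isValue, Pi.star_apply, RCLike.star_def, cons_val_zero, of_apply, cons_val',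
    cons_val_fin_one, zero_mul, cons_val_one, one_mul, zero_add, add_zero, Complex.add_re,
    Complex.mul_re, Complex.conj_re, Complex.conj_im, neg_mul, sub_neg_eq_add, mul_neg,
    Complex.neg_re, Complex.I_re, Complex.I_im, zero_sub, Complex.mul_im, neg_add_rev, neg_neg,
    cons_val]
  ring

lemma corr_vecMulVec_prod {n : ℕ} (ψ : Fin n → Fin 2 → ℂ) (f : Fin n → Fin 3) :
    corr (vecMulVec (fun r => ∏ j, ψ j (r j)) (star fun r => ∏ j, ψ j (r j))) f
      = ∏ j, blochVector (ψ j) (f j) := by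
  have hstar : (star fun r : Fin n → Fin 2 => ∏ j, ψ j (r j))
      = fun r => ∏ j, star (ψ j) (r j) := by
    ext r; simp [star_prod]
  rw [corr, trace_vecMulVec_mul, hstar, prod_dotProduct_tensorOp_mulVec_prod]
  simp only [← ofReal_blochVector, ← Complex.ofReal_prod, Complex.ofReal_re]

lemma matricize_prod {n m : ℕ} (A : Finset (Fin n)) (v : Fin n → Fin m → ℝ) :
    matricize A (fun f => ∏ j, v j (f j))
      = vecMulVec (fun r => ∏ j : {j // j ∈ A}, v j (r j))
          (fun c => ∏ j : {j // j ∉ A}, v j (c j)) := by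
  ext r c
  rw [matricize, vecMulVec_apply, ← Finset.prod_mul_prod_compl A, ← Finset.prod_coe_sort A,
    Finset.prod_subtype Aᶜ (p := (· ∉ A)) fun _ => Finset.mem_compl]
  congr 1 <;> refine Fintype.prod_congr _ _ fun j => ?_ <;> beta_reduce
  · rw [dif_pos j.2]
  · rw [dif_neg j.2]

lemma prod_dotProduct_prod {ι κ R : Type*} [Fintype ι] [DecidableEq ι] [Fintype κ]
    [CommSemiring R] (x y : ι → κ → R) :
    (fun r : ι → κ => ∏ i, x i (r i)) ⬝ᵥ (fun r => ∏ i, y i (r i)) = ∏ i, x i ⬝ᵥ y i := by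
  simp only [dotProduct, Fintype.prod_sum, ← Finset.prod_mul_distrib]

theorem kyFanNorm_matricize_corr_prod_le_one {n : ℕ} (ψ : Fin n → Fin 2 → ℂ)
    (hψ : ∀ j, ∑ x, Complex.normSq (ψ j x) = 1) (A : Finset (Fin n)) (k : ℕ) :
    kyFanNorm k (matricize A (corr (vecMulVec (fun r => ∏ j, ψ j (r j))
      (star fun r => ∏ j, ψ j (r j))))) ≤ 1 := by
  have hunit : ∀ j, blochVector (ψ j) ⬝ᵥ blochVector (ψ j) = 1 := fun j => by
    rw [blochVector_dotProduct_self, hψ, one_pow]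
  have hT : corr (vecMulVec (fun r => ∏ j, ψ j (r j)) (star fun r => ∏ j, ψ j (r j)))
      = fun f => ∏ j, blochVector (ψ j) (f j) := funext (corr_vecMulVec_prod ψ)
  rw [hT, matricize_prod]
  refine (kyFanNorm_vecMulVec_le k _ _).trans_eq ?_
  rw [prod_dotProduct_prod, prod_dotProduct_prod]
  simp [hunit]

/-- Lemma 2(i): For a fully product pure 3-qubit state
`ρ = |ψ₁⟩⟨ψ₁| ⊗ |ψ₂⟩⟨ψ₂| ⊗ |ψ₃⟩⟨ψ₃|`, every `j`-matricization of the full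
correlation tensor satisfies `‖T_{j̲}‖_k ≤ 1` for every `k`. -/
theorem fully_product_three_qubit_matricization_bound
    (ψ : Fin 3 → Fin 2 → ℂ)
    (hψ : ∀ j, ∑ x, Complex.normSq (ψ j x) = 1)
    (ρ : Matrix (Fin 3 → Fin 2) (Fin 3 → Fin 2) ℂ)
    (hρ : ρ = Matrix.vecMulVec (fun r => ∏ j, ψ j (r j))
        (star fun r => ∏ j, ψ j (r j))) :
    ∀ (j : Fin 3) (k : ℕ),
      kyFanNorm k (matricize {j} (corr ρ)) ≤ 1 := by
  intro j k
  subst hρ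
  exact kyFanNorm_matricize_corr_prod_le_one ψ hψ {j} k
end
end

section
/- (Lemma 2(iii)) Let ρ be a pure 3-qubit state that is a product across the bipartition jl|m, i.e. (up to the corresponding reordering of tensor factors) ρ = |χ_{jl}⟩⟨χ_{jl}| ⊗ |φ_m⟩⟨φ_m| with χ_{jl} ∈ ℂ² ⊗ ℂ² and φ_m ∈ ℂ² unit vectors. Then the j-matricization of its full correlation tensor T_{i₁i₂i₃} = tr(ρ (σ_{i₁} ⊗ σ_{i₂} ⊗ σ_{i₃})) satisfies ‖T_{\underline{j}}‖_k ≤ k for every k ∈ {1,2,3}. -/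
/-! For `Ψ = χ ⊗ φ` the correlation tensor factorises, `T_{uvw} = S_{uv} b_w`, where `S` is the
correlation matrix of `χ` and `b` the Bloch vector of `φ`. Both are contractions by one operator
inequality: for Hermitian `P`, `Q`, expanding `⟨(P - Q)²⟩ ≥ 0` gives
`2 Re⟨PQ⟩ ≤ ⟨P²⟩ + ⟨Q²⟩`. With `P = (y·σ) ⊗ 1` and `Q = 1 ⊗ (z·σ)` the right side is
`|y|² + |z|²`, so `2 yᵀ S z ≤ |y|² + |z|²`, and `y = S z` gives `|S z| ≤ |z|`. Hence
`T_{j̲} = S ⊗ bᵀ` is a contraction, its singular values are at most `1`, and any `k` of them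
sum to at most `k`. -/

open Matrix BigOperators ComplexOrder

noncomputable section

open scoped Kronecker

namespace Matrix

section Expectation

variable {n : Type*} [Fintype n]

def expect (ψ : n → ℂ) (X : Matrix n n ℂ) : ℂ := star ψ ⬝ᵥ (X *ᵥ ψ)

lemma expect_conjTranspose (ψ : n → ℂ) (X : Matrix n n ℂ) :
    expect ψ Xᴴ = star (expect ψ X) := by
  rw [expect, expect, star_dotProduct, star_mulVec, conjTranspose_conjTranspose,
    ← dotProduct_mulVec]

lemma expect_sub (ψ : n → ℂ) (X Y : Matrix n n ℂ) :
    expect ψ (X - Y) = expect ψ X - expect ψ Y := by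
  simp only [expect, sub_mulVec, dotProduct_sub]

lemma expect_smul (ψ : n → ℂ) (c : ℂ) (X : Matrix n n ℂ) :
    expect ψ (c • X) = c * expect ψ X := by
  simp only [expect, smul_mulVec, dotProduct_smul, smul_eq_mul]

lemma expect_sum {ι : Type*} (s : Finset ι) (ψ : n → ℂ) (X : ι → Matrix n n ℂ) :
    expect ψ (∑ i ∈ s, X i) = ∑ i ∈ s, expect ψ (X i) := by
  simp only [expect, sum_mulVec, dotProduct_sum]

lemma re_expect_one [DecidableEq n] (ψ : n → ℂ) :
    (expect ψ 1).re = ∑ i, Complex.normSq (ψ i) := by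
  simp [expect, dotProduct, Complex.mul_re, Complex.normSq_apply]

lemma re_expect_smul_one [DecidableEq n] {ψ : n → ℂ} (hψ : ∑ i, Complex.normSq (ψ i) = 1)
    (c : ℝ) : (expect ψ ((c : ℂ) • 1)).re = c := by
  rw [expect_smul, Complex.re_ofReal_mul, re_expect_one, hψ, mul_one]

lemma PosSemidef.re_expect_nonneg {X : Matrix n n ℂ} (hX : X.PosSemidef) (ψ : n → ℂ) :
    0 ≤ (expect ψ X).re :=
  (Complex.nonneg_iff.mp (hX.dotProduct_mulVec_nonneg ψ)).1

lemma IsHermitian.im_expect {X : Matrix n n ℂ} (hX : X.IsHermitian) (ψ : n → ℂ) :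
    (expect ψ X).im = 0 := by
  rw [← Complex.conj_eq_iff_im, ← Complex.star_def, ← expect_conjTranspose, hX.eq]

lemma re_expect_mul_comm {P Q : Matrix n n ℂ} (hP : P.IsHermitian) (hQ : Q.IsHermitian)
    (ψ : n → ℂ) : (expect ψ (Q * P)).re = (expect ψ (P * Q)).re := by
  rw [← hP.eq, ← hQ.eq, ← conjTranspose_mul, expect_conjTranspose, hP.eq, hQ.eq]
  rfl

theorem two_mul_re_expect_mul_le {P Q : Matrix n n ℂ} (hP : P.IsHermitian)
    (hQ : Q.IsHermitian) (ψ : n → ℂ) :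
    2 * (expect ψ (P * Q)).re ≤ (expect ψ (P * P)).re + (expect ψ (Q * Q)).re := by
  have hsq : 0 ≤ (expect ψ ((P - Q)ᴴ * (P - Q))).re :=
    (posSemidef_conjTranspose_mul_self _).re_expect_nonneg ψ
  rw [(hP.sub hQ).eq, sub_mul, mul_sub, mul_sub, expect_sub, expect_sub, expect_sub] at hsq
  simp only [Complex.sub_re, re_expect_mul_comm hP hQ] at hsq
  linarith

lemma trace_vecMulVec_star_mul (ψ : n → ℂ) (X : Matrix n n ℂ) :
    (vecMulVec ψ (star ψ) * X).trace = expect ψ X := by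
  rw [vecMulVec_mul, trace_vecMulVec, dotProduct_comm, ← dotProduct_mulVec, expect]

lemma expect_submatrix_equiv {m : Type*} [Fintype m] (ψ : n → ℂ) (X : Matrix n n ℂ)
    (e : m ≃ n) : expect (ψ ∘ e) (X.submatrix e e) = expect ψ X := by
  rw [expect, submatrix_mulVec_equiv, Function.comp_assoc, e.self_comp_symm, Function.comp_id]
  exact comp_equiv_dotProduct_comp_equiv e (x := star ψ) (y := X *ᵥ ψ)

lemma expect_kronecker {m : Type*} [Fintype m] (χ : m → ℂ) (φ : n → ℂ)
    (X : Matrix m m ℂ) (Y : Matrix n n ℂ) :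
    expect (fun p => χ p.1 * φ p.2) (X ⊗ₖ Y) = expect χ X * expect φ Y := by
  simp only [expect, dotProduct, mulVec, Fintype.sum_prod_type, kroneckerMap_apply,
    Pi.star_apply, star_mul']
  rw [Finset.sum_mul_sum]
  refine Finset.sum_congr rfl fun a _ => Finset.sum_congr rfl fun c _ => ?_
  rw [mul_mul_mul_comm, Finset.sum_mul_sum]
  exact congrArg _ (Finset.sum_congr rfl fun b _ => Finset.sum_congr rfl fun d _ => by ring)

end Expectation

lemma IsHermitian.kronecker {R m n : Type*} [CommSemiring R] [StarRing R]
    {A : Matrix m m R} {B : Matrix n n R} (hA : A.IsHermitian) (hB : B.IsHermitian) :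
    (A ⊗ₖ B).IsHermitian := by
  rw [IsHermitian, conjTranspose_kronecker, hA.eq, hB.eq]

section Contraction

variable {I J K L : Type*} [Fintype I] [Fintype J] [Fintype K] [Fintype L]

def IsContraction (M : Matrix I J ℝ) : Prop := ∀ x, (M *ᵥ x) ⬝ᵥ (M *ᵥ x) ≤ x ⬝ᵥ x

lemma IsContraction.submatrix {I' J' : Type*} [Fintype I'] [Fintype J'] {M : Matrix I J ℝ}
    (hM : M.IsContraction) (e₁ : I' ≃ I) (e₂ : J' ≃ J) :
    (M.submatrix e₁ e₂).IsContraction := by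
  intro x
  rw [submatrix_mulVec_equiv, comp_equiv_dotProduct_comp_equiv,
    ← comp_equiv_dotProduct_comp_equiv e₂.symm (x := x) (y := x)]
  exact hM _

lemma IsContraction.kronecker_row {S : Matrix I K ℝ} (hS : S.IsContraction) {b : L → ℝ}
    (hb : b ⬝ᵥ b ≤ 1) : (of fun u (p : K × L) => S u p.1 * b p.2).IsContraction := by
  intro x
  set z : K → ℝ := fun v => b ⬝ᵥ fun w => x (v, w)
  have hMz : (of fun u (p : K × L) => S u p.1 * b p.2) *ᵥ x = S *ᵥ z := by
    ext u
    simp only [mulVec, dotProduct, of_apply, Fintype.sum_prod_type, z, Finset.mul_sum, mul_assoc]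
  have hz : z ⬝ᵥ z ≤ x ⬝ᵥ x := by
    simp only [dotProduct, Fintype.sum_prod_type, ← sq]
    refine Finset.sum_le_sum fun v _ => ?_
    calc (∑ w, b w * x (v, w)) ^ 2 ≤ (∑ w, b w ^ 2) * ∑ w, x (v, w) ^ 2 :=
          Finset.sum_mul_sq_le_sq_mul_sq _ _ _
      _ ≤ ∑ w, x (v, w) ^ 2 :=
          mul_le_of_le_one_left (Finset.sum_nonneg fun _ _ => sq_nonneg _)
            (by simpa only [dotProduct, ← sq] using hb)
  rw [hMz]
  exact (hS z).trans hz

variable [DecidableEq J]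

lemma singVals_le_one_of_isContraction {M : Matrix I J ℝ} (hM : M.IsContraction) (c : J) :
    singVals M c ≤ 1 := by
  set hH := (posSemidef_conjTranspose_mul_self M).1
  set v : J → ℝ := ⇑(hH.eigenvectorBasis c)
  have hv : v ⬝ᵥ v = 1 := by
    have h := real_inner_self_eq_norm_sq (hH.eigenvectorBasis c)
    rwa [hH.eigenvectorBasis.orthonormal.1 c, one_pow, EuclideanSpace.inner_eq_star_dotProduct,
      star_trivial] at h
  have hquad : v ⬝ᵥ ((Mᴴ * M) *ᵥ v) = (M *ᵥ v) ⬝ᵥ (M *ᵥ v) := by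
    rw [← mulVec_mulVec, dotProduct_mulVec, conjTranspose_eq_transpose_of_trivial,
      vecMul_transpose]
  rw [singVals, Real.sqrt_le_one, hH.eigenvalues_eq, star_trivial, RCLike.re_to_real, hquad]
  exact (hM v).trans hv.le

lemma kyFanNorm_le_of_singVals_le_one {M : Matrix I J ℝ} (h : ∀ c, singVals M c ≤ 1) (k : ℕ) :
    kyFanNorm k M ≤ k := by
  refine Finset.sup'_le _ _ fun s _ => ?_
  split_ifs with hs
  · calc ∑ c ∈ s, singVals M c ≤ ∑ _c ∈ s, (1 : ℝ) := Finset.sum_le_sum fun c _ => h c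
      _ = k := by simp [hs]
  · exact Nat.cast_nonneg k

end Contraction

end Matrix

open Matrix

def pauliVec (y : Fin 3 → ℝ) : Matrix (Fin 2) (Fin 2) ℂ := ∑ u, (y u : ℂ) • pauli u

lemma pauliVec_eq (y : Fin 3 → ℝ) :
    pauliVec y = !![(y 2 : ℂ), y 0 - y 1 * Complex.I; y 0 + y 1 * Complex.I, -y 2] := by
  ext a b
  fin_cases a <;> fin_cases b <;> simp [pauliVec, pauli, Fin.sum_univ_three, sub_eq_add_neg]

lemma isHermitian_pauliVec (y : Fin 3 → ℝ) : (pauliVec y).IsHermitian := by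
  rw [pauliVec_eq]
  ext a b
  fin_cases a <;> fin_cases b <;> simp [sub_eq_add_neg]

lemma pauliVec_mul_self (y : Fin 3 → ℝ) :
    pauliVec y * pauliVec y = ((y ⬝ᵥ y : ℝ) : ℂ) • 1 := by
  rw [pauliVec_eq]
  ext a b
  fin_cases a <;> fin_cases b <;>
    simp [Matrix.mul_apply, dotProduct, Fin.sum_univ_three, Complex.ext_iff] <;> ring_nf <;> simp

lemma isHermitian_pauli (u : Fin 3) : (pauli u).IsHermitian := by
  fin_cases u <;> (ext a b; fin_cases a <;> fin_cases b <;> simp [pauli])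

def corrMatrix (χ : Fin 2 × Fin 2 → ℂ) : Matrix (Fin 3) (Fin 3) ℝ :=
  fun u v => (expect χ (pauli u ⊗ₖ pauli v)).re

def blochVec (φ : Fin 2 → ℂ) : Fin 3 → ℝ := fun w => (expect φ (pauli w)).re

lemma pauliVec_kronecker_pauliVec (y z : Fin 3 → ℝ) :
    pauliVec y ⊗ₖ pauliVec z = ∑ u, ∑ v, ((y u * z v : ℝ) : ℂ) • (pauli u ⊗ₖ pauli v) := by
  ext a b
  simp only [pauliVec, kroneckerMap_apply, Matrix.sum_apply, Matrix.smul_apply, smul_eq_mul,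
    Finset.sum_mul, Finset.mul_sum, Complex.ofReal_mul]
  rw [Finset.sum_comm]
  exact Finset.sum_congr rfl fun _ _ => Finset.sum_congr rfl fun _ _ => by ring

lemma dotProduct_corrMatrix_mulVec (χ : Fin 2 × Fin 2 → ℂ) (y z : Fin 3 → ℝ) :
    y ⬝ᵥ (corrMatrix χ *ᵥ z) = (expect χ (pauliVec y ⊗ₖ pauliVec z)).re := by
  simp only [pauliVec_kronecker_pauliVec, expect_sum, expect_smul, Complex.re_sum,
    Complex.re_ofReal_mul, dotProduct, mulVec, Finset.mul_sum, corrMatrix]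
  exact Finset.sum_congr rfl fun _ _ => Finset.sum_congr rfl fun _ _ => by ring

lemma dotProduct_blochVec (φ : Fin 2 → ℂ) (t : Fin 3 → ℝ) :
    t ⬝ᵥ blochVec φ = (expect φ (pauliVec t)).re := by
  simp only [pauliVec, expect_sum, expect_smul, Complex.re_sum, Complex.re_ofReal_mul,
    dotProduct, blochVec]

theorem two_mul_dotProduct_corrMatrix_mulVec_le {χ : Fin 2 × Fin 2 → ℂ}
    (hχ : ∑ x, Complex.normSq (χ x) = 1) (y z : Fin 3 → ℝ) :
    2 * (y ⬝ᵥ (corrMatrix χ *ᵥ z)) ≤ y ⬝ᵥ y + z ⬝ᵥ z := by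
  have hP : (pauliVec y ⊗ₖ (1 : Matrix (Fin 2) (Fin 2) ℂ)).IsHermitian :=
    (isHermitian_pauliVec y).kronecker isHermitian_one
  have hQ : ((1 : Matrix (Fin 2) (Fin 2) ℂ) ⊗ₖ pauliVec z).IsHermitian :=
    isHermitian_one.kronecker (isHermitian_pauliVec z)
  have h := two_mul_re_expect_mul_le hP hQ χ
  simp only [← mul_kronecker_mul, mul_one, one_mul, pauliVec_mul_self, smul_kronecker,
    kronecker_smul, one_kronecker_one, re_expect_smul_one hχ] at h
  rwa [dotProduct_corrMatrix_mulVec]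

theorem isContraction_corrMatrix {χ : Fin 2 × Fin 2 → ℂ}
    (hχ : ∑ x, Complex.normSq (χ x) = 1) : (corrMatrix χ).IsContraction := fun z => by
  linarith [two_mul_dotProduct_corrMatrix_mulVec_le hχ (corrMatrix χ *ᵥ z) z]

theorem dotProduct_blochVec_self_le_one {φ : Fin 2 → ℂ} (hφ : ∑ x, Complex.normSq (φ x) = 1) :
    blochVec φ ⬝ᵥ blochVec φ ≤ 1 := by
  have h := two_mul_re_expect_mul_le (isHermitian_pauliVec (blochVec φ)) isHermitian_one φ
  rw [mul_one, one_mul, pauliVec_mul_self, re_expect_smul_one hφ, re_expect_one, hφ,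
    ← dotProduct_blochVec] at h
  linarith

def Equiv.funOfEqOrEq {ι : Type*} [DecidableEq ι] (α : Type*) {a b : ι} (hab : a ≠ b)
    (hcover : ∀ i, i = a ∨ i = b) : (ι → α) ≃ α × α where
  toFun c := (c a, c b)
  invFun x i := if i = a then x.1 else x.2
  left_inv c := funext fun i => by rcases hcover i with rfl | rfl <;> simp [hab.symm]
  right_inv x := by simp [hab.symm]

lemma Fin.eq_or_eq_or_eq_of_ne {j l m : Fin 3} (hjl : j ≠ l) (hjm : j ≠ m) (hlm : l ≠ m)
    (p : Fin 3) : p = j ∨ p = l ∨ p = m := by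
  omega

lemma Fin.prod_univ_three_of_ne {R : Type*} [CommMonoid R] {j l m : Fin 3} (hjl : j ≠ l)
    (hjm : j ≠ m) (hlm : l ≠ m) (g : Fin 3 → R) : ∏ p, g p = g j * g l * g m := by
  have huniv : (Finset.univ : Finset (Fin 3)) = {j, l, m} := by
    ext p
    simpa using Fin.eq_or_eq_or_eq_of_ne hjl hjm hlm p
  rw [huniv, Finset.prod_insert (by simp [hjl, hjm]), Finset.prod_insert (by simp [hlm]),
    Finset.prod_singleton, mul_assoc]

section ThreeQubits

variable {j l m : Fin 3}

def complSingletonEquiv (hjl : j ≠ l) (hjm : j ≠ m) (hlm : l ≠ m) (α : Type*) :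
    ({p // p ∉ ({j} : Finset (Fin 3))} → α) ≃ α × α :=
  Equiv.funOfEqOrEq α (a := ⟨l, by simpa using hjl.symm⟩) (b := ⟨m, by simpa using hjm.symm⟩)
    (fun h => hlm (congrArg Subtype.val h)) fun p => by
      rcases Fin.eq_or_eq_or_eq_of_ne hjl hjm hlm p with h | h | h
      · exact absurd (Finset.mem_singleton.mpr h) p.2
      · exact .inl (Subtype.ext h)
      · exact .inr (Subtype.ext h)

/-- `r ↦ ((r j, r l), r m)` -/
def tripleEquiv (hjl : j ≠ l) (hjm : j ≠ m) (hlm : l ≠ m) (α : Type*) :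
    (Fin 3 → α) ≃ (α × α) × α :=
  (Equiv.piEquivPiSubtypeProd (· ∈ ({j} : Finset (Fin 3))) fun _ => α).trans <|
    (Equiv.prodCongr (Equiv.funUnique _ α) (complSingletonEquiv hjl hjm hlm α)).trans
      (Equiv.prodAssoc α α α).symm

lemma tensorOp_eq_submatrix (hjl : j ≠ l) (hjm : j ≠ m) (hlm : l ≠ m)
    (A : Fin 3 → Matrix (Fin 2) (Fin 2) ℂ) :
    tensorOp A = ((A j ⊗ₖ A l) ⊗ₖ A m).submatrix (tripleEquiv hjl hjm hlm _)
      (tripleEquiv hjl hjm hlm _) := by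
  ext r c
  exact Fin.prod_univ_three_of_ne hjl hjm hlm _

theorem corr_vecMulVec_of_eq_mul (hjl : j ≠ l) (hjm : j ≠ m) (hlm : l ≠ m)
    {χ : Fin 2 × Fin 2 → ℂ} {φ : Fin 2 → ℂ} {Ψ : (Fin 3 → Fin 2) → ℂ}
    (hprod : ∀ r, Ψ r = χ (r j, r l) * φ (r m)) (f : Fin 3 → Fin 3) :
    corr (vecMulVec Ψ (star Ψ)) f = corrMatrix χ (f j) (f l) * blochVec φ (f m) := by
  have hΨ : Ψ = (fun p => χ p.1 * φ p.2) ∘ tripleEquiv hjl hjm hlm _ := funext hprod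
  rw [corr, trace_vecMulVec_star_mul, tensorOp_eq_submatrix hjl hjm hlm, hΨ,
    expect_submatrix_equiv, expect_kronecker, Complex.mul_re, (isHermitian_pauli _).im_expect,
    mul_zero, sub_zero]
  rfl

lemma matricize_singleton_eq_submatrix (hjl : j ≠ l) (hjm : j ≠ m) (hlm : l ≠ m) {d : ℕ}
    {T : (Fin 3 → Fin d) → ℝ} {S : Matrix (Fin d) (Fin d) ℝ} {b : Fin d → ℝ}
    (hT : ∀ f, T f = S (f j) (f l) * b (f m)) :
    matricize {j} T = (of fun u (p : Fin d × Fin d) => S u p.1 * b p.2).submatrix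
      (Equiv.funUnique _ _) (complSingletonEquiv hjl hjm hlm _) := by
  ext r c
  simp only [matricize, Finset.mem_singleton, hT, ↓reduceDIte, hjl.symm, hjm.symm,
    Equiv.funUnique_apply, submatrix_apply, of_apply]
  rfl

end ThreeQubits

/-- Lemma 2(iii): If a pure 3-qubit state is a product across the
bipartition `{j,l} | {m}` (for pairwise distinct `j, l, m`, covering all such
bipartitions up to reordering of factors), then the `j`-matricization of its
full correlation tensor satisfies `‖T_{j̲}‖_k ≤ k` for every `k ∈ {1,2,3}`. -/
theorem two_vs_one_product_three_qubit_matricization_bound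
    (j l m : Fin 3) (hjl : j ≠ l) (hjm : j ≠ m) (hlm : l ≠ m)
    (χ : Fin 2 × Fin 2 → ℂ) (φ : Fin 2 → ℂ)
    (hχ : ∑ x, Complex.normSq (χ x) = 1)
    (hφ : ∑ x, Complex.normSq (φ x) = 1)
    (Ψ : (Fin 3 → Fin 2) → ℂ)
    (hprod : ∀ r, Ψ r = χ (r j, r l) * φ (r m))
    (ρ : Matrix (Fin 3 → Fin 2) (Fin 3 → Fin 2) ℂ)
    (hρ : ρ = Matrix.vecMulVec Ψ (star Ψ)) :
    ∀ k : ℕ, 1 ≤ k → k ≤ 3 →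
      kyFanNorm k (matricize {j} (corr ρ)) ≤ k := by
  intro k _ _
  have hT : ∀ f, corr ρ f = corrMatrix χ (f j) (f l) * blochVec φ (f m) := by
    subst hρ
    exact corr_vecMulVec_of_eq_mul hjl hjm hlm hprod
  have hM : (matricize {j} (corr ρ)).IsContraction := by
    rw [matricize_singleton_eq_submatrix hjl hjm hlm hT]
    exact ((isContraction_corrMatrix hχ).kronecker_row
      (dotProduct_blochVec_self_le_one hφ)).submatrix _ _
  exact kyFanNorm_le_of_singVals_le_one (singVals_le_one_of_isContraction hM) k
end
end

section
/- (Lemma 3, norm form) For every 3-qubit density matrix ρ, the full correlation tensor T_{i₁i₂i₃} = tr(ρ (σ_{i₁} ⊗ σ_{i₂} ⊗ σ_{i₃})), i_j ∈ {1,2,3}, satisfies ‖T‖ := (Σ_{i₁,i₂,i₃} T_{i₁i₂i₃}²)^{1/2} ≤ 2, and this bound is attained by the 3-qubit GHZ state (1/√2)(|000⟩ + |111⟩). -/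
open Matrix BigOperators ComplexOrder

noncomputable section

/-- The 3-qubit GHZ state vector `(1/√2)(|000⟩ + |111⟩)`. -/
def ghz : (Fin 3 → Fin 2) → ℂ :=
  fun r => if r = (fun _ => 0) then ((Real.sqrt 2 : ℝ) : ℂ)⁻¹
    else if r = (fun _ => 1) then ((Real.sqrt 2 : ℝ) : ℂ)⁻¹ else 0

/-!
Expand `ρ` in the basis of Pauli strings `P_f = σ_{f₁} ⊗ ⋯ ⊗ σ_{fₙ}` (`f : Fin n → Fin 4`,
`σ₀ = 1`), with real coefficients `t_f = tr(ρ P_f)`. Orthogonality of the basis gives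
`∑ t_f² = 2ⁿ tr ρ² ≤ 2ⁿ`. The spin flip `ρ̃ = σ_y^{⊗n} ρ̄ σ_y^{⊗n}` is again positive and has
coefficients `w_f t_f`, where `w_f = ±1` is `-1` to the number of nontrivial factors of `P_f`;
hence `∑ w_f t_f² = 2ⁿ tr(ρ ρ̃) ≥ 0`. For odd `n` a full correlation (no trivial factor) has
`w_f = -1`, so subtracting the two relations gives `2 ∑_full t_f² ≤ 2ⁿ`, i.e. `‖T‖² ≤ 4` for
three qubits. The GHZ value is a direct computation.
-/

namespace Matrix

variable {m : Type*} [Fintype m]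

theorem trace_map_conj_mul (A B : Matrix m m ℂ) :
    (A.map (starRingEnd ℂ) * B).trace = starRingEnd ℂ (A * B.map (starRingEnd ℂ)).trace := by
  rw [AddMonoidHom.map_trace, Matrix.map_mul, map_map]
  congr 2
  ext i j
  simp

theorem IsHermitian.conj_trace_mul {A B : Matrix m m ℂ} (hA : A.IsHermitian)
    (hB : B.IsHermitian) : starRingEnd ℂ (A * B).trace = (A * B).trace := by
  rw [← Complex.star_def, ← trace_conjTranspose, conjTranspose_mul, hA.eq, hB.eq, trace_mul_comm]

namespace PosSemidef

variable [DecidableEq m] {A B : Matrix m m ℂ}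

theorem trace_mul_nonneg (hA : A.PosSemidef) (hB : B.PosSemidef) : 0 ≤ (A * B).trace := by
  obtain ⟨P, rfl⟩ : ∃ P : Matrix m m ℂ, A = Pᴴ * P := by
    open scoped MatrixOrder in
    exact CStarAlgebra.nonneg_iff_eq_star_mul_self.mp hA.nonneg
  rw [Matrix.mul_assoc, trace_mul_comm]
  exact (hB.mul_mul_conjTranspose_same P).trace_nonneg

theorem re_trace_mul_self_le (hA : A.PosSemidef) : (A * A).trace.re ≤ A.trace.re ^ 2 := by
  set ev := hA.isHermitian.eigenvalues
  let conj := Unitary.conjStarAlgAut ℂ _ hA.isHermitian.eigenvectorUnitary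
  have hA_eq : A = conj (diagonal (RCLike.ofReal ∘ ev)) := hA.isHermitian.spectral_theorem
  have htrace (M : Matrix m m ℂ) : (conj M).trace = M.trace := by
    rw [Unitary.conjStarAlgAut_apply, trace_mul_cycle, Unitary.coe_star_mul_self, Matrix.one_mul]
  have hAA : (A * A).trace.re = ∑ i, ev i ^ 2 := by
    rw [hA_eq, ← map_mul, htrace, diagonal_mul_diagonal, trace_diagonal]
    simp [sq]
  have hA1 : A.trace.re = ∑ i, ev i := by
    rw [hA_eq, htrace, trace_diagonal]
    simp
  rw [hAA, hA1, sq, Finset.sum_mul_sum]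
  exact Finset.sum_le_sum fun i _ => by
    simpa [sq] using Finset.single_le_sum (f := fun j => ev i * ev j)
      (fun j _ => mul_nonneg (hA.eigenvalues_nonneg i) (hA.eigenvalues_nonneg j))
      (Finset.mem_univ i)

end PosSemidef

end Matrix

theorem Fin.sum_pi_succ {α M : Type*} [Fintype α] [AddCommMonoid M] {n : ℕ}
    (F : (Fin (n + 1) → α) → M) : ∑ g, F g = ∑ a, ∑ g, F (Fin.cons a g) := by
  rw [← (Fin.consEquiv fun _ => α).sum_comp, Fintype.sum_prod_type]
  rfl

theorem Fin.sum_pi_three {α M : Type*} [Fintype α] [AddCommMonoid M]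
    (F : (Fin 3 → α) → M) : ∑ g, F g = ∑ a, ∑ b, ∑ c, F ![a, b, c] := by
  simp only [Fin.sum_pi_succ, Fintype.sum_unique]
  rfl

def pauliBasis : Fin 4 → Matrix (Fin 2) (Fin 2) ℂ := Fin.cons 1 pauli

theorem pauliBasis_succ (i : Fin 3) : pauliBasis i.succ = pauli i := rfl

theorem pauliBasis_isHermitian (i : Fin 4) : (pauliBasis i).IsHermitian := by
  ext a b
  fin_cases i <;> fin_cases a <;> fin_cases b <;> simp [pauliBasis, pauli, conjTranspose_apply]

theorem sum_pauliBasis_apply_mul_apply (a b c d : Fin 2) :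
    ∑ i, pauliBasis i a b * pauliBasis i c d = if a = d ∧ b = c then 2 else 0 := by
  fin_cases a <;> fin_cases b <;> fin_cases c <;> fin_cases d <;>
    simp [pauliBasis, pauli, Fin.sum_univ_succ] <;> norm_num

def flipSign (i : Fin 4) : ℝ := if i = 0 then 1 else -1

theorem abs_flipSign (i : Fin 4) : |flipSign i| = 1 := by
  unfold flipSign
  split_ifs <;> simp

theorem flipSign_succ (i : Fin 3) : flipSign i.succ = -1 := if_neg i.succ_ne_zero

theorem pauli_one_map_conj : (pauli 1).map (starRingEnd ℂ) = -pauli 1 := by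
  ext a b
  fin_cases a <;> fin_cases b <;> simp [pauli]

theorem pauli_one_mul_map_conj_pauliBasis_mul_pauli_one (i : Fin 4) :
    pauli 1 * (pauliBasis i).map (starRingEnd ℂ) * pauli 1 = (flipSign i : ℂ) • pauliBasis i := by
  ext a b
  fin_cases i <;> fin_cases a <;> fin_cases b <;>
    simp [pauliBasis, pauli, flipSign, mul_apply, Fin.sum_univ_two, vecMul, dotProduct]

section TensorOp

variable {n : ℕ}

theorem tensorOp_mul (A B : Fin n → Matrix (Fin 2) (Fin 2) ℂ) :
    tensorOp A * tensorOp B = tensorOp fun j => A j * B j := by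
  ext r c
  simp only [tensorOp, mul_apply, ← Finset.prod_mul_distrib]
  exact (Fintype.prod_sum fun j (i : Fin 2) => A j (r j) i * B j i (c j)).symm

theorem tensorOp_map (f : ℂ →+* ℂ) (A : Fin n → Matrix (Fin 2) (Fin 2) ℂ) :
    (tensorOp A).map f = tensorOp fun j => (A j).map f := by
  ext r c
  simp [tensorOp]

theorem tensorOp_conjTranspose (A : Fin n → Matrix (Fin 2) (Fin 2) ℂ) :
    (tensorOp A)ᴴ = tensorOp fun j => (A j)ᴴ := by
  ext r c
  simp [tensorOp, conjTranspose_apply]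

theorem tensorOp_smul (s : Fin n → ℂ) (A : Fin n → Matrix (Fin 2) (Fin 2) ℂ) :
    tensorOp (fun j => s j • A j) = (∏ j, s j) • tensorOp A := by
  ext r c
  simp [tensorOp, Finset.prod_mul_distrib]

theorem tensorOp_isHermitian {A : Fin n → Matrix (Fin 2) (Fin 2) ℂ}
    (hA : ∀ j, (A j).IsHermitian) : (tensorOp A).IsHermitian := by
  rw [IsHermitian, tensorOp_conjTranspose]
  exact congrArg tensorOp (funext hA)

end TensorOp

section PauliString

variable {n : ℕ}

def pauliString (f : Fin n → Fin 4) : Matrix (Fin n → Fin 2) (Fin n → Fin 2) ℂ :=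
  tensorOp fun j => pauliBasis (f j)

theorem pauliString_isHermitian (f : Fin n → Fin 4) : (pauliString f).IsHermitian :=
  tensorOp_isHermitian fun j => pauliBasis_isHermitian (f j)

theorem corr_eq_re_trace_mul_pauliString (ρ : Matrix (Fin n → Fin 2) (Fin n → Fin 2) ℂ)
    (g : Fin n → Fin 3) : corr ρ g = (ρ * pauliString (Fin.succ ∘ g)).trace.re := by
  simp only [corr, pauliString, Function.comp_apply, pauliBasis_succ]

theorem sum_pauliString_apply_mul_apply (a b c d : Fin n → Fin 2) :
    ∑ f, pauliString f a b * pauliString f c d = if a = d ∧ b = c then 2 ^ n else 0 := by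
  simp only [pauliString, tensorOp, ← Finset.prod_mul_distrib]
  rw [← Fintype.prod_sum (fun j i => pauliBasis i (a j) (b j) * pauliBasis i (c j) (d j))]
  simp only [sum_pauliBasis_apply_mul_apply, Fintype.prod_ite_zero, Finset.prod_const,
    Finset.card_univ, Fintype.card_fin, funext_iff, forall_and]

theorem sum_trace_mul_pauliString_mul_trace_mul_pauliString
    (ρ σ : Matrix (Fin n → Fin 2) (Fin n → Fin 2) ℂ) :
    ∑ f, (ρ * pauliString f).trace * (σ * pauliString f).trace = 2 ^ n * (ρ * σ).trace := by
  simp only [trace, diag, mul_apply, Finset.sum_mul_sum, mul_mul_mul_comm _ (pauliString _ _ _)]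
  simp_rw [Finset.sum_comm (s := (Finset.univ : Finset (Fin n → Fin 4))), ← Finset.mul_sum,
    sum_pauliString_apply_mul_apply]
  simp [mul_ite, ite_and, Finset.mul_sum, Finset.sum_ite_eq, Finset.sum_ite_eq', mul_comm]

theorem sum_re_trace_mul_pauliString_mul_re_trace_mul_pauliString
    {ρ σ : Matrix (Fin n → Fin 2) (Fin n → Fin 2) ℂ} (hρ : ρ.IsHermitian) (hσ : σ.IsHermitian) :
    ∑ f, (ρ * pauliString f).trace.re * (σ * pauliString f).trace.re =
      2 ^ n * (ρ * σ).trace.re := by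
  have him {A : Matrix (Fin n → Fin 2) (Fin n → Fin 2) ℂ} (hA : A.IsHermitian) (f) :
      (A * pauliString f).trace.im = 0 :=
    Complex.conj_eq_iff_im.mp (hA.conj_trace_mul (pauliString_isHermitian f))
  have h := congrArg Complex.re (sum_trace_mul_pauliString_mul_trace_mul_pauliString ρ σ)
  rw [← Complex.ofReal_ofNat, ← Complex.ofReal_pow, Complex.re_ofReal_mul, Complex.re_sum] at h
  simpa [Complex.mul_re, him hρ, him hσ] using h

end PauliString

section SpinFlip

variable {n : ℕ}

def spinFlip (ρ : Matrix (Fin n → Fin 2) (Fin n → Fin 2) ℂ) :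
    Matrix (Fin n → Fin 2) (Fin n → Fin 2) ℂ :=
  tensorOp (fun _ => pauli 1) * ρ.map (starRingEnd ℂ) * tensorOp (fun _ => pauli 1)

theorem spinFlip_posSemidef {ρ : Matrix (Fin n → Fin 2) (Fin n → Fin 2) ℂ}
    (hρ : ρ.PosSemidef) : (spinFlip ρ).PosSemidef := by
  have hY : (tensorOp fun _ : Fin n => pauli 1).IsHermitian :=
    tensorOp_isHermitian fun _ => by
      ext a b
      fin_cases a <;> fin_cases b <;> simp [pauli, conjTranspose_apply]
  have hρT : ρ.map (starRingEnd ℂ) = ρᵀ := by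
    ext i j
    exact hρ.isHermitian.apply j i
  rw [spinFlip, hρT]
  conv => enter [1, 2]; rw [← hY.eq]
  exact hρ.transpose.mul_mul_conjTranspose_same _

theorem map_conj_pauliY_mul_pauliString_mul_pauliY (f : Fin n → Fin 4) :
    (tensorOp (fun _ => pauli 1) * pauliString f * tensorOp (fun _ => pauli 1)).map
      (starRingEnd ℂ) = ((∏ j, flipSign (f j) : ℝ) : ℂ) • pauliString f := by
  simp only [Matrix.map_mul, pauliString, tensorOp_map, pauli_one_map_conj, tensorOp_mul,
    neg_mul, mul_neg, neg_neg, pauli_one_mul_map_conj_pauliBasis_mul_pauli_one, tensorOp_smul,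
    Complex.ofReal_prod]

theorem trace_spinFlip_mul_pauliString (ρ : Matrix (Fin n → Fin 2) (Fin n → Fin 2) ℂ)
    (f : Fin n → Fin 4) :
    (spinFlip ρ * pauliString f).trace =
      (∏ j, flipSign (f j) : ℝ) * starRingEnd ℂ (ρ * pauliString f).trace := by
  rw [spinFlip, Matrix.mul_assoc _ _ (pauliString f), trace_mul_cycle, trace_mul_comm,
    trace_map_conj_mul, map_conj_pauliY_mul_pauliString_mul_pauliY,
    Matrix.mul_smul, trace_smul, smul_eq_mul, map_mul, Complex.conj_ofReal]

end SpinFlip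

section DensityMatrix

variable {n : ℕ} {ρ : Matrix (Fin n → Fin 2) (Fin n → Fin 2) ℂ}

theorem sum_sq_re_trace_mul_pauliString_le (hρ : ρ.PosSemidef) (htr : ρ.trace = 1) :
    ∑ f, (ρ * pauliString f).trace.re ^ 2 ≤ 2 ^ n := by
  have h1 := hρ.re_trace_mul_self_le
  rw [htr, Complex.one_re, one_pow] at h1
  simp only [sq, sum_re_trace_mul_pauliString_mul_re_trace_mul_pauliString hρ.isHermitian
    hρ.isHermitian]
  exact mul_le_of_le_one_right (by positivity) h1

theorem sum_flipSign_mul_sq_re_trace_mul_pauliString_nonneg (hρ : ρ.PosSemidef) :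
    0 ≤ ∑ f, (∏ j, flipSign (f j)) * (ρ * pauliString f).trace.re ^ 2 := by
  have h := sum_re_trace_mul_pauliString_mul_re_trace_mul_pauliString hρ.isHermitian
    (spinFlip_posSemidef hρ).isHermitian
  simp only [trace_spinFlip_mul_pauliString,
    hρ.isHermitian.conj_trace_mul (pauliString_isHermitian _), Complex.re_ofReal_mul] at h
  have h0 := (Complex.le_def.mp (hρ.trace_mul_nonneg (spinFlip_posSemidef hρ))).1
  calc 0 ≤ 2 ^ n * (ρ * spinFlip ρ).trace.re := mul_nonneg (by positivity) (by simpa using h0)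
    _ = _ := by rw [← h]; exact Finset.sum_congr rfl fun f _ => by ring

theorem two_mul_sum_corr_sq_le (hn : Odd n) (hρ : ρ.PosSemidef) (htr : ρ.trace = 1) :
    2 * ∑ g : Fin n → Fin 3, corr ρ g ^ 2 ≤ 2 ^ n := by
  set t : (Fin n → Fin 4) → ℝ := fun f => (ρ * pauliString f).trace.re
  set w : (Fin n → Fin 4) → ℝ := fun f => ∏ j, flipSign (f j)
  let succ : (Fin n → Fin 3) ↪ (Fin n → Fin 4) :=
    ⟨fun g => Fin.succ ∘ g, (Fin.succ_injective _).comp_left⟩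
  have hfull : 2 * ∑ g : Fin n → Fin 3, corr ρ g ^ 2 ≤ ∑ f, (1 - w f) * t f ^ 2 :=
    calc 2 * ∑ g : Fin n → Fin 3, corr ρ g ^ 2 = ∑ g, (1 - w (succ g)) * t (succ g) ^ 2 := by
          rw [Finset.mul_sum]
          refine Finset.sum_congr rfl fun g _ => ?_
          have hw : w (succ g) = -1 := by simp [w, succ, flipSign_succ, hn.neg_one_pow]
          have hcorr : corr ρ g = t (succ g) := corr_eq_re_trace_mul_pauliString ρ g
          rw [hw, hcorr]
          ring
      _ = ∑ f ∈ Finset.univ.map succ, (1 - w f) * t f ^ 2 := by rw [Finset.sum_map]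
      _ ≤ ∑ f, (1 - w f) * t f ^ 2 := Finset.sum_le_univ_sum_of_nonneg fun f =>
          mul_nonneg (sub_nonneg.mpr (le_of_abs_le (by simp [w, Finset.abs_prod, abs_flipSign])))
            (sq_nonneg _)
  simp only [sub_mul, one_mul, Finset.sum_sub_distrib] at hfull
  linarith [sum_sq_re_trace_mul_pauliString_le hρ htr,
    sum_flipSign_mul_sq_re_trace_mul_pauliString_nonneg hρ]

end DensityMatrix

theorem star_ghz : star ghz = ghz := by
  funext r
  simp only [ghz, Pi.star_apply]
  split_ifs <;> simp

theorem sum_ghz_mul (F : (Fin 3 → Fin 2) → ℂ) :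
    ∑ r, ghz r * F r = (F 0 + F 1) / (Real.sqrt 2 : ℂ) := by
  have h01 : (0 : Fin 3 → Fin 2) ≠ 1 := fun h => by simpa using congrFun h 0
  rw [Fintype.sum_eq_add 0 1 h01 fun r hr => by
    simp [ghz, ← Pi.zero_def, ← Pi.one_def, hr.1, hr.2]]
  simp [ghz, ← Pi.zero_def, ← Pi.one_def, h01.symm, div_eq_inv_mul, mul_add]

theorem trace_ghz_mul (M : Matrix (Fin 3 → Fin 2) (Fin 3 → Fin 2) ℂ) :
    (vecMulVec ghz (star ghz) * M).trace = (M 0 0 + M 0 1 + M 1 0 + M 1 1) / 2 := by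
  simp only [star_ghz, vecMulVec_mul, trace_vecMulVec, dotProduct, vecMul, sum_ghz_mul]
  have hsqrt : (Real.sqrt 2 : ℂ) * Real.sqrt 2 = 2 := by
    rw [← Complex.ofReal_mul, Real.mul_self_sqrt zero_le_two, Complex.ofReal_ofNat]
  rw [← add_div, div_div, hsqrt]
  ring

theorem sum_corr_ghz_sq :
    ∑ i₁ : Fin 3, ∑ i₂ : Fin 3, ∑ i₃ : Fin 3,
      corr (vecMulVec ghz (star ghz)) ![i₁, i₂, i₃] ^ 2 = 4 := by
  simp only [corr, trace_ghz_mul, tensorOp, Pi.zero_apply, Pi.one_apply, Fin.prod_univ_three,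
    Fin.sum_univ_three, cons_val_zero, cons_val_one, cons_val_two, head_cons, tail_cons]
  norm_num [pauli, Complex.div_re, cons_val_two, tail_cons, head_cons]

/-- Lemma 3, norm form: Every 3-qubit density matrix `ρ`
satisfies `‖T‖ ≤ 2` for the standard norm of its full correlation tensor, and
the bound is attained by the GHZ state `(1/√2)(|000⟩ + |111⟩)`. -/
theorem three_qubit_full_correlation_norm_le_two
    (ρ : Matrix (Fin 3 → Fin 2) (Fin 3 → Fin 2) ℂ)
    (hρ : ρ.PosSemidef) (hρtr : ρ.trace = 1) :
    Real.sqrt (∑ i₁ : Fin 3, ∑ i₂ : Fin 3, ∑ i₃ : Fin 3,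
        (corr ρ ![i₁, i₂, i₃]) ^ 2) ≤ 2 ∧
    Real.sqrt (∑ i₁ : Fin 3, ∑ i₂ : Fin 3, ∑ i₃ : Fin 3,
        (corr (Matrix.vecMulVec ghz (star ghz)) ![i₁, i₂, i₃]) ^ 2) = 2 := by
  constructor
  · have h := two_mul_sum_corr_sq_le (by decide : Odd 3) hρ hρtr
    rw [Fin.sum_pi_three] at h
    rw [Real.sqrt_le_left zero_le_two]
    linarith
  · rw [sum_corr_ghz_sq, show (4 : ℝ) = 2 ^ 2 by norm_num, Real.sqrt_sq zero_le_two]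
end
end

section
/- (LU invariance) Let ρ be an n-qubit density matrix, let U₁,…,U_n be 2×2 unitary matrices, and let ρ' = (U₁ ⊗ ⋯ ⊗ U_n) ρ (U₁ ⊗ ⋯ ⊗ U_n)†. Then for every nonempty proper subset A ⊂ {1,…,n}, the A-matricizations of the full correlation tensors of ρ and ρ' have the same singular values; in particular ‖T(ρ')_{\underline{A}}‖_k = ‖T(ρ)_{\underline{A}}‖_k for every Ky Fan k norm, and the Frobenius and trace norms of all matricizations are invariant under local unitary transformations. -/
open Matrix BigOperators ComplexOrder

noncomputable section

/-! Conjugation by a unitary `U` maps each Pauli matrix to a real combination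
`U† σᵢ U = ∑ₖ Rᵢₖ σₖ`, and trace orthogonality `tr (σᵢ σₖ) = 2 δᵢₖ` makes `R` orthogonal.
Hence a local unitary acts on the correlation tensor by `R₁ ⊗ ⋯ ⊗ Rₙ`, and on every
matricization by `M ↦ P M Qᵀ` with `P`, `Q` orthogonal. This conjugates `MᵀM` by `Q`, so its
characteristic polynomial, hence its eigenvalues and its trace, do not change. -/

namespace Matrix

variable {ι κ m n p R : Type*} [Fintype ι]

def piKronecker [CommMonoid R] (B : ι → Matrix m n R) : Matrix (ι → m) (ι → n) R :=
  of fun r c => ∏ j, B j (r j) (c j)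

@[simp]
theorem piKronecker_apply [CommMonoid R] (B : ι → Matrix m n R) (r : ι → m) (c : ι → n) :
    piKronecker B r c = ∏ j, B j (r j) (c j) :=
  rfl

theorem piKronecker_transpose [CommMonoid R] (B : ι → Matrix m n R) :
    (piKronecker B)ᵀ = piKronecker fun j => (B j)ᵀ :=
  rfl

theorem piKronecker_conjTranspose [CommMonoid R] [StarMul R] (B : ι → Matrix m n R) :
    (piKronecker B)ᴴ = piKronecker fun j => (B j)ᴴ := by
  ext r c
  simp [star_prod]

theorem piKronecker_mul [CommSemiring R] [DecidableEq ι] [Fintype n] (B : ι → Matrix m n R)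
    (C : ι → Matrix n p R) : piKronecker B * piKronecker C = piKronecker fun j => B j * C j := by
  ext r c
  simp only [mul_apply, piKronecker_apply, Fintype.prod_sum, Finset.prod_mul_distrib]

theorem piKronecker_one [CommSemiring R] [DecidableEq m] :
    piKronecker (fun _ : ι => (1 : Matrix m m R)) = 1 := by
  ext r c
  simp [one_apply, Finset.prod_boole, funext_iff]

theorem piKronecker_sum_smul [CommSemiring R] [DecidableEq ι] [Fintype κ] (c : ι → κ → R)
    (B : κ → Matrix m n R) :
    piKronecker (fun j => ∑ k, c j k • B k) =
      ∑ g : ι → κ, (∏ j, c j (g j)) • piKronecker fun j => B (g j) := by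
  ext r s
  simp only [piKronecker_apply, sum_apply, smul_apply, smul_eq_mul, Fintype.prod_sum,
    Finset.prod_mul_distrib]

theorem piKronecker_transpose_mul_self [CommSemiring R] [DecidableEq ι] [Fintype m]
    [DecidableEq m] {B : ι → Matrix m m R} (hB : ∀ j, (B j)ᵀ * B j = 1) :
    (piKronecker B)ᵀ * piKronecker B = 1 := by
  rw [piKronecker_transpose, piKronecker_mul, funext hB, piKronecker_one]

variable {I J K : Type*} [Fintype I] [Fintype J]

theorem transpose_mul_self_mul_mul_transpose [CommSemiring R] [Fintype K] [DecidableEq I]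
    (M : Matrix I J R) {P : Matrix K I R} {Q : Matrix J J R} (hP : Pᵀ * P = 1) :
    (P * M * Qᵀ)ᵀ * (P * M * Qᵀ) = Q * (Mᵀ * M) * Qᵀ := by
  simp only [transpose_mul, transpose_transpose, Matrix.mul_assoc]
  rw [← Matrix.mul_assoc Pᵀ, hP, Matrix.one_mul]

theorem charpoly_mul_mul_transpose [CommRing R] [DecidableEq J] (N : Matrix J J R)
    {Q : Matrix J J R} (hQ : Qᵀ * Q = 1) : (Q * N * Qᵀ).charpoly = N.charpoly := by
  rw [charpoly_mul_comm, ← mul_assoc, hQ, one_mul]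

theorem trace_mul_mul_transpose [CommSemiring R] [DecidableEq J] (N : Matrix J J R)
    {Q : Matrix J J R} (hQ : Qᵀ * Q = 1) : (Q * N * Qᵀ).trace = N.trace := by
  rw [trace_mul_comm, ← mul_assoc, hQ, one_mul]

theorem sum_sum_sq_eq_trace_transpose_mul_self [CommSemiring R] (M : Matrix I J R) :
    ∑ r, ∑ c, M r c ^ 2 = (Mᵀ * M).trace := by
  simp only [trace, diag_apply, mul_apply, transpose_apply, sq]
  exact Finset.sum_comm

theorem IsHermitian.star_trace_mul [CommRing R] [StarRing R] {A B : Matrix I I R}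
    (hA : A.IsHermitian) (hB : B.IsHermitian) : star (A * B).trace = (A * B).trace := by
  rw [← trace_conjTranspose, conjTranspose_mul, hA.eq, hB.eq, trace_mul_comm]

end Matrix

section Orthogonal

variable {I J K : Type*} [Fintype I] [Fintype J] [Fintype K] [DecidableEq I] [DecidableEq J]
  {P : Matrix K I ℝ} {Q : Matrix J J ℝ}

theorem singVals_mul_mul_transpose (M : Matrix I J ℝ) (hP : Pᵀ * P = 1)
    (hQ : Qᵀ * Q = 1) : singVals (P * M * Qᵀ) = singVals M := by
  have hchar : ((P * M * Qᵀ)ᴴ * (P * M * Qᵀ)).charpoly = (Mᴴ * M).charpoly := by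
    simp only [conjTranspose_eq_transpose_of_trivial]
    rw [transpose_mul_self_mul_mul_transpose M hP, charpoly_mul_mul_transpose _ hQ]
  ext j
  -- `eigenvalues` are the sorted roots of the characteristic polynomial, so no permutation
  -- is needed.
  rw [singVals, singVals, (IsHermitian.eigenvalues_eq_eigenvalues_iff _ _).2 hchar]

theorem sum_sum_sq_mul_mul_transpose (M : Matrix I J ℝ) (hP : Pᵀ * P = 1) (hQ : Qᵀ * Q = 1) :
    ∑ r, ∑ c, (P * M * Qᵀ) r c ^ 2 = ∑ r, ∑ c, M r c ^ 2 := by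
  rw [sum_sum_sq_eq_trace_transpose_mul_self, sum_sum_sq_eq_trace_transpose_mul_self,
    transpose_mul_self_mul_mul_transpose M hP, trace_mul_mul_transpose _ hQ]

end Orthogonal

theorem matricize_piKronecker_mulVec {n m : ℕ} (A : Finset (Fin n))
    (B : Fin n → Matrix (Fin m) (Fin m) ℝ) (v : (Fin n → Fin m) → ℝ) :
    matricize A (piKronecker B *ᵥ v) =
      (piKronecker fun j : {j // j ∈ A} => B j) * matricize A v *
        (piKronecker fun j : {j // j ∉ A} => B j)ᵀ := by
  set e := (Equiv.piEquivPiSubtypeProd (· ∈ A) fun _ => Fin m).symm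
  have hsplit : ∀ (r r' : {j // j ∈ A} → Fin m) (c c' : {j // j ∉ A} → Fin m),
      piKronecker B (e (r, c)) (e (r', c')) =
      piKronecker (fun j : {j // j ∈ A} => B j) r r' *
        piKronecker (fun j : {j // j ∉ A} => B j) c c' := by
    intro r r' c c'
    rw [piKronecker_apply, ← Fintype.prod_subtype_mul_prod_subtype (· ∈ A)
      (fun j => B j (e (r, c) j) (e (r', c') j))]
    congr 1 <;> rw [piKronecker_apply] <;>
      exact Finset.prod_congr (by congr!) fun j _ => by simp [e, Equiv.piEquivPiSubtypeProd, j.2]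
  ext r c
  change (piKronecker B *ᵥ v) (e (r, c)) = _
  simp only [mulVec, dotProduct, ← e.sum_comp, Fintype.sum_prod_type, hsplit, mul_apply,
    transpose_apply, Finset.sum_mul]
  rw [Finset.sum_comm]
  refine Finset.sum_congr rfl fun r' _ => Finset.sum_congr rfl fun c' _ => ?_
  exact mul_right_comm _ _ _

theorem tensorOp_eq_piKronecker {n : ℕ} (A : Fin n → Matrix (Fin 2) (Fin 2) ℂ) :
    tensorOp A = piKronecker A :=
  rfl

theorem trace_pauli (i : Fin 3) : (pauli i).trace = 0 := by
  fin_cases i <;> simp [pauli, trace, Fin.sum_univ_two]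

theorem conjTranspose_pauli (i : Fin 3) : (pauli i)ᴴ = pauli i := by
  fin_cases i <;> ext r c <;> fin_cases r <;> fin_cases c <;> simp [pauli]

theorem trace_pauli_mul_pauli (i k : Fin 3) :
    (pauli i * pauli k).trace = if i = k then 2 else 0 := by
  fin_cases i <;> fin_cases k <;> simp [pauli, trace, Fin.sum_univ_two, one_add_one_eq_two]

theorem eq_sum_pauli_of_trace_eq_zero {M : Matrix (Fin 2) (Fin 2) ℂ} (hM : M.trace = 0) :
    M = ∑ k, ((M * pauli k).trace / 2) • pauli k := by
  have h11 : M 1 1 = -M 0 0 := by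
    rw [trace, Fin.sum_univ_two, diag_apply, diag_apply] at hM
    linear_combination hM
  ext i j
  fin_cases i <;> fin_cases j <;>
    simp [pauli, trace, mul_apply, Fin.sum_univ_two, Fin.sum_univ_three, h11] <;>
    ring_nf <;> simp only [Complex.I_sq] <;> ring

theorem trace_sum_pauli_mul_sum_pauli (a b : Fin 3 → ℂ) :
    ((∑ k, a k • pauli k) * ∑ k, b k • pauli k).trace = 2 * ∑ k, a k * b k := by
  simp only [Finset.sum_mul, Finset.mul_sum, smul_mul_smul_comm, trace_sum, trace_smul,
    trace_pauli_mul_pauli, smul_eq_mul, mul_ite, mul_zero]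
  simp [mul_comm]

/-- The coefficients of `U† σᵢ U` in the Pauli basis: the image of `U` under `U(2) → SO(3)`. -/
def blochRotation (U : Matrix (Fin 2) (Fin 2) ℂ) : Matrix (Fin 3) (Fin 3) ℝ :=
  of fun i k => ((Uᴴ * pauli i * U * pauli k).trace / 2).re

theorem conjTranspose_mul_pauli_mul {U : Matrix (Fin 2) (Fin 2) ℂ} (hU : Uᴴ * U = 1)
    (i : Fin 3) : Uᴴ * pauli i * U = ∑ k, (blochRotation U i k : ℂ) • pauli k := by
  have htrace : (Uᴴ * pauli i * U).trace = 0 := by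
    rw [trace_mul_cycle, mul_eq_one_comm.mp hU, one_mul, trace_pauli]
  have hherm : (Uᴴ * pauli i * U).IsHermitian := by
    simpa [mul_assoc] using isHermitian_conjTranspose_mul_mul U (conjTranspose_pauli i)
  conv_lhs => rw [eq_sum_pauli_of_trace_eq_zero htrace]
  refine Finset.sum_congr rfl fun k _ =>
    congrArg (· • pauli k) (Complex.conj_eq_iff_re.mp ?_).symm
  rw [map_div₀, map_ofNat]
  exact congrArg (· / 2) (hherm.star_trace_mul (conjTranspose_pauli k))

theorem blochRotation_transpose_mul_self {U : Matrix (Fin 2) (Fin 2) ℂ} (hU : Uᴴ * U = 1) :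
    (blochRotation U)ᵀ * blochRotation U = 1 := by
  refine mul_eq_one_comm.mp ?_
  ext i i'
  have h := trace_sum_pauli_mul_sum_pauli (fun k => blochRotation U i k)
    (fun k => blochRotation U i' k)
  have hcancel : Uᴴ * pauli i * U * (Uᴴ * pauli i' * U) = Uᴴ * (pauli i * pauli i') * U := by
    simp only [mul_assoc]
    rw [← mul_assoc U, mul_eq_one_comm.mp hU, one_mul]
  rw [← conjTranspose_mul_pauli_mul hU, ← conjTranspose_mul_pauli_mul hU, hcancel,
    trace_mul_cycle, mul_eq_one_comm.mp hU, one_mul, trace_pauli_mul_pauli] at h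
  rw [mul_apply, one_apply, ← Complex.ofReal_inj]
  split_ifs at h ⊢ <;> push_cast [transpose_apply] <;> linear_combination -h / 2

theorem corr_conj_tensorOp {n : ℕ} (ρ : Matrix (Fin n → Fin 2) (Fin n → Fin 2) ℂ)
    {U : Fin n → Matrix (Fin 2) (Fin 2) ℂ} (hU : ∀ j, (U j)ᴴ * U j = 1) :
    corr (tensorOp U * ρ * (tensorOp U)ᴴ) =
      piKronecker (fun j => blochRotation (U j)) *ᵥ corr ρ := by
  ext f
  have hconj : (tensorOp U)ᴴ * (tensorOp fun j => pauli (f j)) * tensorOp U =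
      ∑ g : Fin n → Fin 3, (∏ j, (blochRotation (U j) (f j) (g j) : ℂ)) •
        tensorOp fun j => pauli (g j) := by
    simp only [tensorOp_eq_piKronecker, piKronecker_conjTranspose, piKronecker_mul,
      conjTranspose_mul_pauli_mul (hU _)]
    exact piKronecker_sum_smul _ _
  calc corr (tensorOp U * ρ * (tensorOp U)ᴴ) f
      = (ρ * ((tensorOp U)ᴴ * (tensorOp fun j => pauli (f j)) * tensorOp U)).trace.re := by
        rw [corr]
        simp only [mul_assoc]
        rw [trace_mul_comm]
        simp only [mul_assoc]
    _ = _ := by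
        rw [hconj]
        simp only [Matrix.mul_sum, Matrix.mul_smul, trace_sum, trace_smul, Complex.re_sum,
          ← Complex.ofReal_prod, smul_eq_mul, Complex.re_ofReal_mul, mulVec, dotProduct,
          piKronecker_apply, corr]

theorem local_unitary_invariance_of_matricization_norms_general
    (n : ℕ)
    (ρ : Matrix (Fin n → Fin 2) (Fin n → Fin 2) ℂ)
    (U : Fin n → Matrix (Fin 2) (Fin 2) ℂ)
    (hU : ∀ j, (U j)ᴴ * U j = 1)
    (ρ' : Matrix (Fin n → Fin 2) (Fin n → Fin 2) ℂ)
    (hρ' : ρ' = tensorOp U * ρ * (tensorOp U)ᴴ)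
    (A : Finset (Fin n)) :
    (∃ e : ({j // j ∉ A} → Fin 3) ≃ ({j // j ∉ A} → Fin 3),
        ∀ c, singVals (matricize A (corr ρ')) c =
          singVals (matricize A (corr ρ)) (e c)) ∧
    (∀ k : ℕ, kyFanNorm k (matricize A (corr ρ')) =
        kyFanNorm k (matricize A (corr ρ))) ∧
    traceNorm (matricize A (corr ρ')) = traceNorm (matricize A (corr ρ)) ∧
    Real.sqrt (∑ r, ∑ c, (matricize A (corr ρ') r c) ^ 2) =
      Real.sqrt (∑ r, ∑ c, (matricize A (corr ρ) r c) ^ 2) := by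
  have hR : ∀ j, (blochRotation (U j))ᵀ * blochRotation (U j) = 1 :=
    fun j => blochRotation_transpose_mul_self (hU j)
  have hM : matricize A (corr ρ') =
      (piKronecker fun j : {j // j ∈ A} => blochRotation (U j)) * matricize A (corr ρ) *
        (piKronecker fun j : {j // j ∉ A} => blochRotation (U j))ᵀ := by
    rw [hρ', corr_conj_tensorOp ρ hU, matricize_piKronecker_mulVec]
  have hP := piKronecker_transpose_mul_self fun j : {j // j ∈ A} => hR j
  have hQ := piKronecker_transpose_mul_self fun j : {j // j ∉ A} => hR j
  have hσ : singVals (matricize A (corr ρ')) = singVals (matricize A (corr ρ)) := by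
    rw [hM, singVals_mul_mul_transpose _ hP hQ]
  refine ⟨⟨Equiv.refl _, fun c => congrFun hσ c⟩, fun k => ?_, ?_, ?_⟩
  · simp only [kyFanNorm, hσ]
  · simp only [traceNorm, hσ]
  · rw [hM, sum_sum_sq_mul_mul_transpose _ hP hQ]

/-- LU invariance: If `ρ' = (U₁ ⊗ ⋯ ⊗ U_n) ρ (U₁ ⊗ ⋯ ⊗ U_n)†`
for 2×2 unitaries `U_j`, then for every nonempty proper subset `A` of the
subsystems the `A`-matricizations of the full correlation tensors of `ρ` and
`ρ'` have the same singular values (up to a permutation); in particular all Ky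
Fan norms (hence the trace norm) and the Frobenius norm of the matricizations
are invariant under local unitary transformations. -/
theorem local_unitary_invariance_of_matricization_norms
    (n : ℕ)
    (ρ : Matrix (Fin n → Fin 2) (Fin n → Fin 2) ℂ)
    (hρ : ρ.PosSemidef) (hρtr : ρ.trace = 1)
    (U : Fin n → Matrix (Fin 2) (Fin 2) ℂ)
    (hU : ∀ j, (U j)ᴴ * U j = 1)
    (ρ' : Matrix (Fin n → Fin 2) (Fin n → Fin 2) ℂ)
    (hρ' : ρ' = tensorOp U * ρ * (tensorOp U)ᴴ)
    (A : Finset (Fin n)) (hA : A.Nonempty) (hA' : A ≠ Finset.univ) :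
    (∃ e : ({j // j ∉ A} → Fin 3) ≃ ({j // j ∉ A} → Fin 3),
        ∀ c, singVals (matricize A (corr ρ')) c =
          singVals (matricize A (corr ρ)) (e c)) ∧
    (∀ k : ℕ, kyFanNorm k (matricize A (corr ρ')) =
        kyFanNorm k (matricize A (corr ρ))) ∧
    traceNorm (matricize A (corr ρ')) = traceNorm (matricize A (corr ρ)) ∧
    Real.sqrt (∑ r, ∑ c, (matricize A (corr ρ') r c) ^ 2) =
      Real.sqrt (∑ r, ∑ c, (matricize A (corr ρ) r c) ^ 2) :=
  local_unitary_invariance_of_matricization_norms_general n ρ U hU ρ' hρ' A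
end
end
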